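/- Upward-closed outflow lemma: let h₁, h₂, h_F be flow graphs with h₁ ⋆ h_F defined, h₁ ⪯ctx h₂, and compatible_⪯(h₁), compatible_⪯(h₂), compatible_⪯(h_F). Let in = (h₁ ⋆ h_F).in and define h_{2+F} = (h₂.X ⊎ h_F.X, h₂.E ⊎ h_F.E, in). Then tf(h₁ ⋆ h_F)(in)(y) ⪯ tf(h_{2+F})(in)(y) for every node y outside h₂.X ∪ h_F.X; moreover the restriction of h_{2+F} to h₂.X lies in closure^{h_F.X}_⪯(h₂) and the restriction of h_{2+F} to h_F.X lies in closure^{h₂.X}_⪯(h_F). -/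

import Mathlib

universe u

/-- A flow monoid: a commutative monoid whose natural order
(`m ≤ n ↔ ∃ o, n = m + o`) is a partial order that forms an ω-cpo, with
continuous addition. `csup` assigns to every ascending chain its join. -/
class FlowMonoid (M : Type u) extends AddCommMonoid M, PartialOrder M, OrderBot M where
  protected add_le_add_left : ∀ a b : M, a ≤ b → ∀ c : M, c + a ≤ c + b
  protected exists_add_of_le : ∀ {a b : M}, a ≤ b → ∃ c : M, b = a + c
  protected le_self_add : ∀ a b : M, a ≤ a + b
  /-- The join of an ascending chain. -/
  csup : (ℕ → M) → M
  isLUB_csup : ∀ K : ℕ → M, Monotone K → IsLUB (Set.range K) (csup K)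
  add_csup : ∀ (n : M) (K : ℕ → M), Monotone K → n + csup K = csup fun i => n + K i

variable {M : Type u} [FlowMonoid M]

/-- Continuity: `f` commutes with joins of ascending chains. -/
def FMCont (f : M → M) : Prop :=
  ∀ K : ℕ → M, Monotone K →
    IsLUB (Set.range fun i => f (K i)) (f (FlowMonoid.csup K))

/-- A flow graph: a finite set of nodes `X ⊆ ℕ`, continuous edge functions, and
a finitely supported inflow from sources outside `X` into `X`. (The edge
functions of sources outside `X` and the inflow outside its domain are
canonically zero.) -/
structure FlowGraph (M : Type u) [FlowMonoid M] where
  /-- The nodes. -/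
  X : Finset ℕ
  /-- The edge functions: `E x y` labels the edge from `x` to `y`. -/
  E : ℕ → ℕ → M → M
  /-- The inflow: `inflow y x` is the flow the graph receives at `x ∈ X` from the
  external node `y ∉ X`. -/
  inflow : ℕ → ℕ → M
  econt : ∀ x y, x ∈ X → FMCont (E x y)
  edom : ∀ x y, x ∉ X → E x y = fun _ => 0
  inflow_fin : ∀ x, (Function.support fun y => inflow y x).Finite
  inflow_dom : ∀ y x, inflow y x ≠ 0 → y ∉ X ∧ x ∈ X

namespace FlowGraph

/-- One step of the flow fixed-point computation, with inflow `i`. -/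
noncomputable def stepWith (h : FlowGraph M) (i : ℕ → ℕ → M) (c : ℕ → M) : ℕ → M :=
  fun x => if x ∈ h.X then (∑ᶠ y, i y x) + ∑ y ∈ h.X, h.E y x (c y) else 0

/-- The flow for a custom inflow `i`, obtained by Kleene iteration: the least
function satisfying the flow equation. -/
noncomputable def flowWith (h : FlowGraph M) (i : ℕ → ℕ → M) : ℕ → M :=
  fun x => FlowMonoid.csup fun n => (h.stepWith i)^[n] (fun _ => 0) x

/-- The flow of a flow graph. -/
noncomputable def flow (h : FlowGraph M) : ℕ → M := h.flowWith h.inflow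

/-- The outflow of a flow graph: `out x y = E x y (flow x)`. -/
noncomputable def out (h : FlowGraph M) (x y : ℕ) : M := h.E x y (h.flow x)

/-- The transfer function: maps an inflow `i` to the resulting outflow at `y`. -/
noncomputable def tf (h : FlowGraph M) (i : ℕ → ℕ → M) (y : ℕ) : M :=
  ∑ x ∈ h.X, h.E x y (h.flowWith i x)

/-- The ghost multiplication of flow graphs: disjoint union of the node sets and
edges; the inflow of each component is restricted to sources outside the other. -/
def gmul (s t : FlowGraph M) : FlowGraph M where
  X := s.X ∪ t.X
  E := fun x y => if x ∈ s.X then s.E x y else t.E x y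
  inflow := fun y x => if y ∈ s.X ∪ t.X then 0 else s.inflow y x + t.inflow y x
  econt := by
    intro x y hx
    try dsimp only
    by_cases hs : x ∈ s.X
    · rw [if_pos hs]; exact s.econt x y hs
    · rw [if_neg hs]
      rcases Finset.mem_union.mp hx with h | h
      · exact absurd h hs
      · exact t.econt x y h
  edom := by
    intro x y hx
    try dsimp only
    rw [if_neg fun h => hx (Finset.mem_union_left _ h)]
    exact t.edom x y fun h => hx (Finset.mem_union_right _ h)
  inflow_fin := by
    intro x
    refine Set.Finite.subset ((s.inflow_fin x).union (t.inflow_fin x)) ?_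
    intro y hy
    rw [Function.mem_support] at hy
    try dsimp only at hy
    by_cases hmem : y ∈ s.X ∪ t.X
    · rw [if_pos hmem] at hy; exact absurd rfl hy
    · rw [if_neg hmem] at hy
      by_cases h1 : s.inflow y x = 0
      · have h2 : t.inflow y x ≠ 0 := fun h2 => hy (by rw [h1, h2, add_zero])
        exact Set.mem_union_right _ (Function.mem_support.mpr h2)
      · exact Set.mem_union_left _ (Function.mem_support.mpr h1)
  inflow_dom := by
    intro y x hy
    try dsimp only at hy
    by_cases hmem : y ∈ s.X ∪ t.X
    · rw [if_pos hmem] at hy; exact absurd rfl hy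
    · rw [if_neg hmem] at hy
      refine ⟨hmem, ?_⟩
      by_cases h1 : s.inflow y x = 0
      · have h2 : t.inflow y x ≠ 0 := fun h2 => hy (by rw [h1, h2, add_zero])
        exact Finset.mem_union_right _ (t.inflow_dom y x h2).2
      · exact Finset.mem_union_left _ (s.inflow_dom y x h1).2

/-- Definedness of the multiplication `s ⋆ t` of flow graphs: the ghost
multiplication is defined, the inflow expectation of each graph at the mutual
boundary matches the outflow of the other, and the flows are preserved in the
composition (whose result is then `gmul s t`). -/
def MDef (s t : FlowGraph M) : Prop :=
  Disjoint s.X t.X ∧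
  (∀ x ∈ s.X, ∀ y ∈ t.X, s.out x y = t.inflow x y ∧ t.out y x = s.inflow y x) ∧
  (∀ x ∈ s.X, (gmul s t).flow x = s.flow x) ∧
  (∀ y ∈ t.X, (gmul s t).flow y = t.flow y)

end FlowGraph

/-- The pointwise join of an ascending chain of functions `X → M`. -/
noncomputable def chainJoin {X : Finset ℕ} (Ch : ℕ → ({x : ℕ // x ∈ X} → M)) :
    {x : ℕ // x ∈ X} → M :=
  fun x => FlowMonoid.csup fun i => Ch i x

/-- `≤`-continuity of a function on `X → M`: it commutes with joins of
pointwise-ascending chains. -/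
def ContOn (X : Finset ℕ)
    (f : ({x : ℕ // x ∈ X} → M) → ({x : ℕ // x ∈ X} → M)) : Prop :=
  ∀ Ch : ℕ → ({x : ℕ // x ∈ X} → M), (∀ i x, Ch i x ≤ Ch (i + 1) x) →
    ∀ x, IsLUB (Set.range fun i => f (Ch i) x) (f (chainJoin Ch) x)

/-- Pointwise `≤`-monotonicity of a function on `X → M`. -/
def MonoOn (X : Finset ℕ)
    (f : ({x : ℕ // x ∈ X} → M) → ({x : ℕ // x ∈ X} → M)) : Prop :=
  ∀ c d : {x : ℕ // x ∈ X} → M, (∀ x, c x ≤ d x) → ∀ x, f c x ≤ f d x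

/-- Pointwise `⪯`-monotonicity of a function on `X → M`. -/
def RMonoOn (r : M → M → Prop) (X : Finset ℕ)
    (f : ({x : ℕ // x ∈ X} → M) → ({x : ℕ // x ∈ X} → M)) : Prop :=
  ∀ c d : {x : ℕ // x ∈ X} → M, (∀ x, r (c x) (d x)) → ∀ x, r (f c x) (f d x)

/-- The join of the Kleene chain `⨆ᵢ fⁱ(⊥)` of a function on `X → M`
(`⊥` is the constant-0 function); for continuous `f` this is `lfp(f)`. -/
noncomputable def kleeneOn {X : Finset ℕ}
    (f : ({x : ℕ // x ∈ X} → M) → ({x : ℕ // x ∈ X} → M)) : {x : ℕ // x ∈ X} → M :=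
  fun x => FlowMonoid.csup fun i => (f^[i] fun _ => 0) x

/-- Condition (C4): for all `≤`-continuous, pointwise-`⪯`-monotone functions
`f, g` on `X → M` with `fⁱ(⊥)` pointwise-`⪯` `gⁱ(⊥)` for all `i` and
`lfp(f)` pointwise-`⪯` `g(lfp(f))`, one has `⨆ᵢ fⁱ(⊥)` pointwise-`⪯` `⨆ᵢ gⁱ(⊥)`. -/
def C4 (r : M → M → Prop) (X : Finset ℕ) : Prop :=
  ∀ f g : ({x : ℕ // x ∈ X} → M) → ({x : ℕ // x ∈ X} → M),
    ContOn X f → ContOn X g → RMonoOn r X f → RMonoOn r X g →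
    (∀ (i : ℕ) (x : {x : ℕ // x ∈ X}), r ((f^[i] fun _ => 0) x) ((g^[i] fun _ => 0) x)) →
    (∀ x, r (kleeneOn f x) (g (kleeneOn f) x)) →
    ∀ x, r (kleeneOn f x) (kleeneOn g x)

/-- `compatible_⪯(h)`: conditions (C1)–(C4) of the relation `⪯` with respect to
the flow graph `h`. -/
def Compatible (r : M → M → Prop) (h : FlowGraph M) : Prop :=
  -- (C1) transitive and `0 ⪯ 0`
  (∀ m n o : M, r m n → r n o → r m o) ∧ r 0 0 ∧
  -- (C2) compatible with addition
  (∀ m n o : M, r m n → r (m + o) (n + o)) ∧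
  -- (C3) the edge functions of `h` are `⪯`-monotone
  (∀ x y : ℕ, x ∈ h.X → ∀ m n : M, r m n → r (h.E x y m) (h.E x y n)) ∧
  -- (C4)
  C4 r h.X
/-- The estimator induced on flow graphs: same nodes, same inflow, and the
transfer functions are related for every smaller inflow. -/
def ctxLe (r : M → M → Prop) (s₁ s₂ : FlowGraph M) : Prop :=
  s₁.X = s₂.X ∧ s₁.inflow = s₂.inflow ∧
  ∀ i : ℕ → ℕ → M, (∀ y x, i y x ≤ s₁.inflow y x) →
    ∀ y, y ∉ s₁.X → r (s₁.tf i y) (s₂.tf i y)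

/-- `inflowLe r Y X i₁ i₂` is the relation `i₁ ⪯^Y i₂` on inflows over node set
`X`: the inflows agree on all sources outside `Y`, and for each target the sums
of the contributions from `Y` are related by `r`. -/
def inflowLe (r : M → M → Prop) (Y X : Finset ℕ) (i₁ i₂ : ℕ → ℕ → M) : Prop :=
  (∀ y, y ∉ Y → ∀ x, i₁ y x = i₂ y x) ∧
  (∀ x ∈ X, r (∑ y ∈ Y, i₁ y x) (∑ y ∈ Y, i₂ y x))

/-- The `⪯`-upward `Y`-closure of a flow graph: all graphs obtained from `h` by
replacing its inflow with a `⪯^Y`-larger one. -/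
def closureSet (r : M → M → Prop) (Y : Finset ℕ) (h : FlowGraph M) :
    Set (FlowGraph M) :=
  {h' | h'.X = h.X ∧ h'.E = h.E ∧ inflowLe r Y h.X h.inflow h'.inflow}

namespace FlowGraph

/-- The restriction `h|_Y` of a flow graph to `Y`: nodes `h.X ∩ Y`, the edge
functions of `h`, and as inflow the original inflow from sources outside `h.X`
together with the outflow from the dropped nodes `h.X ∖ Y`. -/
noncomputable def restrict (h : FlowGraph M) (Y : Finset ℕ) : FlowGraph M where
  X := h.X ∩ Y
  E := fun x y => if x ∈ h.X ∩ Y then h.E x y else fun _ => 0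
  inflow := fun s t =>
    if t ∈ h.X ∩ Y then
      (if s ∈ h.X then (if s ∈ Y then 0 else h.E s t (h.flow s)) else h.inflow s t)
    else 0
  econt := by
    intro x y hx
    try dsimp only
    rw [if_pos hx]
    exact h.econt x y (Finset.mem_inter.mp hx).1
  edom := by
    intro x y hx
    try dsimp only
    rw [if_neg hx]
  inflow_fin := by
    intro t
    refine Set.Finite.subset ((h.X.finite_toSet).union (h.inflow_fin t)) ?_
    intro s hs
    rw [Function.mem_support] at hs
    try dsimp only at hs
    by_cases ht : t ∈ h.X ∩ Y
    · rw [if_pos ht] at hs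
      by_cases hsx : s ∈ h.X
      · exact Set.mem_union_left _ hsx
      · rw [if_neg hsx] at hs
        exact Set.mem_union_right _ (Function.mem_support.mpr hs)
    · rw [if_neg ht] at hs
      exact absurd rfl hs
  inflow_dom := by
    intro s t hst
    try dsimp only at hst
    by_cases ht : t ∈ h.X ∩ Y
    · refine ⟨?_, ht⟩
      intro hmem
      rw [if_pos ht, if_pos (Finset.mem_inter.mp hmem).1,
        if_pos (Finset.mem_inter.mp hmem).2] at hst
      exact hst rfl
    · rw [if_neg ht] at hst
      exact absurd rfl hst

end FlowGraph


/-!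
Flows are least fixed points of continuous step functions on the ω-cpo `ℕ → M`. Let `T` be the
total inflow of `h₁ ⋆ h_F`, which is also that of `h₂ ⌢ h_F`. By Bekić's lemma the flow of
`s ⌢ t` on `t.X` is the least fixed point of the step of `t` in which `s` has been solved for,
`c ↦ step_t (T + out_s (flow_s (T + out_t c))) c`. For `s = h₁` this is `h_F.flow`, for `s = h₂`
it is the flow of `h_{2+F}`, and (C4) for `h_F` compares the two. Its hypotheses come from
`h₁ ⪯ctx h₂`: while `c ≤ h_F.flow`, the total inflow `T + out_F c` of `h₁` comes from an inflow
below `h₁.in`, because definedness of `h₁ ⋆ h_F` makes the inflow from `h_F.X` equal to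
`out_F h_F.flow`; and (C4) for `h₁`, `h₂` makes their flows `⪯`-monotone in the inflow. Passing
`h_F.flow ⪯ flow(h_{2+F})` through `h₁ ⪯ctx h₂` once more compares the outflows of the `h₁`- and
`h₂`-parts, and all three claims are sums of these two comparisons.
-/
open OmegaCompletePartialOrder

instance FlowMonoid.toCanonicallyOrderedAdd : CanonicallyOrderedAdd M where
  exists_add_of_le h := FlowMonoid.exists_add_of_le h
  le_self_add := FlowMonoid.le_self_add
  le_add_self a b := by rw [add_comm]; exact FlowMonoid.le_self_add a b

noncomputable instance FlowMonoid.toOmegaCompletePartialOrder : OmegaCompletePartialOrder M where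
  ωSup c := FlowMonoid.csup c
  le_ωSup c i := (FlowMonoid.isLUB_csup c c.monotone).1 ⟨i, rfl⟩
  ωSup_le c _ h := (FlowMonoid.isLUB_csup c c.monotone).2 (Set.forall_mem_range.2 h)

namespace FlowMonoid

theorem add_ωSup (m : M) (c : Chain M) :
    m + ωSup c = ωSup (c.map ⟨(m + ·), fun _ _ h => add_le_add_right h m⟩) :=
  add_csup m c c.monotone

theorem ωScottContinuous_add : ωScottContinuous fun p : M × M => p.1 + p.2 := by
  refine ωScottContinuous.of_monotone_map_ωSup
    ⟨fun _ _ h => add_le_add h.1 h.2, fun c => le_antisymm ?_ ?_⟩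
  · change ωSup (c.map OrderHom.fst) + ωSup (c.map OrderHom.snd) ≤ _
    rw [add_ωSup, ωSup_le_iff]
    intro j
    change ωSup (c.map OrderHom.fst) + (c j).2 ≤ _
    rw [add_comm, add_ωSup, ωSup_le_iff]
    intro i
    change (c j).2 + (c i).1 ≤ _
    refine le_ωSup_of_le (max i j) ?_
    rw [add_comm]
    exact add_le_add (c.monotone (le_max_left i j)).1 (c.monotone (le_max_right i j)).2
  · exact ωSup_le _ _ fun n =>
      add_le_add (le_ωSup (c.map OrderHom.fst) n) (le_ωSup (c.map OrderHom.snd) n)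

end FlowMonoid

theorem FMCont.ωScottContinuous {f : M → M} (hf : FMCont f) : ωScottContinuous f := by
  rintro _ ⟨c, rfl⟩ - - a ha
  rw [← Set.range_comp, ha.unique (isLUB_range_ωSup c)]
  exact hf c c.monotone

namespace OmegaCompletePartialOrder.ωScottContinuous

variable {α : Type*} [OmegaCompletePartialOrder α]

theorem add {f g : α → M} (hf : ωScottContinuous f) (hg : ωScottContinuous g) :
    ωScottContinuous fun a => f a + g a :=
  FlowMonoid.ωScottContinuous_add.comp (Prod.ωScottContinuous.prodMk hf hg)

theorem const_add {ι : Type*} {g : α → ι → M} (T : ι → M) (hg : ωScottContinuous g) :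
    ωScottContinuous fun a => T + g a :=
  of_apply₂ fun x => const.add (hg.apply₂ x)

theorem finset_sum {κ : Type*} (s : Finset κ) {f : κ → α → M}
    (hf : ∀ i ∈ s, ωScottContinuous (f i)) : ωScottContinuous fun a => ∑ i ∈ s, f i a := by
  classical
  induction s using Finset.induction_on with
  | empty =>
    simp only [Finset.sum_empty]
    exact const
  | insert i s hi ih =>
    simp only [Finset.sum_insert hi]
    exact (hf i (Finset.mem_insert_self i s)).add
      (ih fun j hj => hf j (Finset.mem_insert_of_mem hj))

end OmegaCompletePartialOrder.ωScottContinuous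

section Kleene

open OmegaCompletePartialOrder.fixedPoints

variable {ι : Type*} {f : (ι → M) → ι → M}

noncomputable def kleene (f : (ι → M) → ι → M) : ι → M :=
  fun x => FlowMonoid.csup fun n => (f^[n] 0) x

theorem kleene_eq_ωSup (hf : Monotone f) :
    kleene f = ωSup (iterateChain ⟨f, hf⟩ 0 fun _ => zero_le) := rfl

theorem iterate_le_kleene (hf : Monotone f) (n : ℕ) : f^[n] 0 ≤ kleene f := by
  rw [kleene_eq_ωSup hf]
  exact le_ωSup (iterateChain ⟨f, hf⟩ 0 fun _ => zero_le) n

theorem map_kleene (hf : ωScottContinuous f) : f (kleene f) = kleene f := by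
  rw [kleene_eq_ωSup hf.monotone]
  exact ωSup_iterate_mem_fixedPoint (ContinuousHom.ofFun f hf) 0 fun _ => zero_le

theorem kleene_le (hf : ωScottContinuous f) {a : ι → M} (ha : f a ≤ a) : kleene f ≤ a := by
  rw [kleene_eq_ωSup hf.monotone]
  exact ωSup_iterate_le_prefixedPoint (ContinuousHom.ofFun f hf) 0 _ ha fun _ => zero_le

theorem ωScottContinuous_kleene {α : Type*} [OmegaCompletePartialOrder α]
    {F : α → (ι → M) → ι → M} (hF : ωScottContinuous fun p : α × (ι → M) => F p.1 p.2) :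
    ωScottContinuous fun a => kleene (F a) := by
  have hiter : ∀ n, ωScottContinuous fun a => (F a)^[n] 0 := by
    intro n
    induction n with
    | zero => exact ωScottContinuous.const
    | succ n ih =>
      simp only [Function.iterate_succ_apply']
      exact hF.comp (Prod.ωScottContinuous.prodMk ωScottContinuous.id ih)
  let c : Chain (α →𝒄 (ι → M)) :=
    ⟨fun n => ContinuousHom.ofFun _ (hiter n), fun m n hmn a =>
      (iterateChain ⟨F a, fun c d h => hF.monotone (a := (a, c)) (b := (a, d)) ⟨le_rfl, h⟩⟩ 0
        fun _ => zero_le).monotone hmn⟩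
  convert (ωSup c).ωScottContinuous
  ext a
  rfl

end Kleene

section AddPreorderRel

variable {N : Type*} [AddCommMonoid N]

structure IsAddPreorderRel (r : N → N → Prop) : Prop where
  trans : ∀ m n o, r m n → r n o → r m o
  zero : r 0 0
  add_right : ∀ m n o, r m n → r (m + o) (n + o)

namespace IsAddPreorderRel

variable {r : N → N → Prop}

theorem refl (hr : IsAddPreorderRel r) (m : N) : r m m := by
  simpa using hr.add_right 0 0 m hr.zero

theorem add (hr : IsAddPreorderRel r) {a b c d : N} (hab : r a b) (hcd : r c d) :
    r (a + c) (b + d) :=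
  hr.trans _ _ _ (hr.add_right a b c hab) (by simpa only [add_comm b] using hr.add_right c d b hcd)

theorem add_left (hr : IsAddPreorderRel r) (a : N) {c d : N} (hcd : r c d) : r (a + c) (a + d) :=
  hr.add (hr.refl a) hcd

theorem sum (hr : IsAddPreorderRel r) {κ : Type*} (s : Finset κ) {f g : κ → N}
    (hfg : ∀ i ∈ s, r (f i) (g i)) : r (∑ i ∈ s, f i) (∑ i ∈ s, g i) := by
  classical
  induction s using Finset.induction_on with
  | empty => simpa using hr.zero
  | insert i s hi ih =>
    simp only [Finset.sum_insert hi]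
    exact hr.add (hfg i (Finset.mem_insert_self i s))
      (ih fun j hj => hfg j (Finset.mem_insert_of_mem hj))

end IsAddPreorderRel

end AddPreorderRel

theorem Compatible.isAddPreorderRel {r : M → M → Prop} {h : FlowGraph M}
    (hc : Compatible r h) : IsAddPreorderRel r :=
  ⟨hc.1, hc.2.1, hc.2.2.1⟩

def RelOn (r : M → M → Prop) (X : Finset ℕ) (c d : ℕ → M) : Prop :=
  ∀ x ∈ X, r (c x) (d x)

def DependsOnlyOn (X : Finset ℕ) (f : (ℕ → M) → ℕ → M) : Prop :=
  ∀ c d : ℕ → M, Set.EqOn c d X → Set.EqOn (f c) (f d) X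

section C4

variable {r : M → M → Prop} {X : Finset ℕ} {f g : (ℕ → M) → ℕ → M}

noncomputable def extendByZero (X : Finset ℕ) (c : {x // x ∈ X} → M) : ℕ → M :=
  fun z => if hz : z ∈ X then c ⟨z, hz⟩ else 0

theorem extendByZero_of_mem (c : {x // x ∈ X} → M) {z : ℕ} (hz : z ∈ X) :
    extendByZero X c z = c ⟨z, hz⟩ :=
  dif_pos hz

theorem ωScottContinuous_extendByZero : ωScottContinuous (extendByZero (M := M) X) := by
  refine ωScottContinuous.of_apply₂ fun z => ?_
  by_cases hz : z ∈ X
  · simp only [extendByZero, dif_pos hz]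
    exact ωScottContinuous.apply _
  · simp only [extendByZero, dif_neg hz]
    exact ωScottContinuous.const

noncomputable def restrictOn (X : Finset ℕ) (f : (ℕ → M) → ℕ → M) :
    ({x // x ∈ X} → M) → {x // x ∈ X} → M :=
  fun c x => f (extendByZero X c) x

theorem OmegaCompletePartialOrder.ωScottContinuous.restrictOn (hf : ωScottContinuous f) :
    ωScottContinuous (restrictOn X f) :=
  ωScottContinuous.of_apply₂ fun x =>
    ((ωScottContinuous.apply x.1).comp hf).comp ωScottContinuous_extendByZero

theorem OmegaCompletePartialOrder.ωScottContinuous.contOn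
    {g : ({x // x ∈ X} → M) → {x // x ∈ X} → M} (hg : ωScottContinuous g) : ContOn X g :=
  fun Ch hCh x => (hg.apply₂ x).isLUB (c := ⟨Ch, monotone_nat_of_le_succ fun i x => hCh i x⟩)

theorem iterate_restrictOn (hf : DependsOnlyOn X f) (n : ℕ) (x : {x // x ∈ X}) :
    ((restrictOn X f)^[n] fun _ => 0) x = (f^[n] 0) x := by
  induction n generalizing x with
  | zero => rfl
  | succ n ih =>
    simp only [Function.iterate_succ_apply']
    exact hf _ _ (fun z hz => by rw [extendByZero_of_mem _ hz, ih]) x.2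

theorem kleeneOn_restrictOn (hf : DependsOnlyOn X f) (x : {x // x ∈ X}) :
    kleeneOn (restrictOn X f) x = kleene f x :=
  congrArg FlowMonoid.csup (funext fun n => iterate_restrictOn hf n x)

theorem C4.relOn_kleene (hC4 : C4 r X) (hrefl : ∀ m, r m m)
    (hfX : DependsOnlyOn X f) (hgX : DependsOnlyOn X g)
    (hf : ωScottContinuous f) (hg : ωScottContinuous g)
    (hfr : ∀ c d, RelOn r X c d → RelOn r X (f c) (f d))
    (hgr : ∀ c d, RelOn r X c d → RelOn r X (g c) (g d))
    (hfg : ∀ c d, RelOn r X c d → c ≤ kleene f → RelOn r X (f c) (g d)) :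
    RelOn r X (kleene f) (kleene g) := by
  have hext : ∀ c d : {x // x ∈ X} → M, (∀ x, r (c x) (d x)) →
      RelOn r X (extendByZero X c) (extendByZero X d) := fun c d hcd z hz => by
    simpa only [extendByZero_of_mem _ hz] using hcd ⟨z, hz⟩
  have hiter : ∀ n, RelOn r X (f^[n] 0) (g^[n] 0) := by
    intro n
    induction n with
    | zero => exact fun _ _ => hrefl 0
    | succ n ih =>
      simp only [Function.iterate_succ_apply']
      exact hfg _ _ ih (iterate_le_kleene hf.monotone n)
  have hlfp : ∀ x : {x // x ∈ X},
      r (kleeneOn (restrictOn X f) x) (restrictOn X g (kleeneOn (restrictOn X f)) x) := by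
    intro x
    have hagree : Set.EqOn (extendByZero X (kleeneOn (restrictOn X f))) (kleene f) X :=
      fun z hz => by rw [extendByZero_of_mem _ hz, kleeneOn_restrictOn hfX]
    have hfix := hfg _ _ (fun z _ => hrefl _) le_rfl x x.2
    rw [map_kleene hf] at hfix
    rwa [kleeneOn_restrictOn hfX, restrictOn, hgX _ _ hagree x.2]
  intro x hx
  have key := hC4 (restrictOn X f) (restrictOn X g) hf.restrictOn.contOn hg.restrictOn.contOn
    (fun c d hcd x => hfr _ _ (hext c d hcd) x x.2)
    (fun c d hcd x => hgr _ _ (hext c d hcd) x x.2)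
    (fun n x => by rw [iterate_restrictOn hfX, iterate_restrictOn hgX]; exact hiter n x x.2)
    hlfp ⟨x, hx⟩
  rwa [kleeneOn_restrictOn hfX, kleeneOn_restrictOn hgX] at key

end C4

noncomputable def inflowSum (i : ℕ → ℕ → M) : ℕ → M := fun x => ∑ᶠ y, i y x

namespace FlowGraph

section Step

variable (h : FlowGraph M)

noncomputable def outSum (c : ℕ → M) : ℕ → M := fun x => ∑ y ∈ h.X, h.E y x (c y)

noncomputable def step (T c : ℕ → M) : ℕ → M :=
  fun x => if x ∈ h.X then T x + h.outSum c x else 0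

noncomputable def flowFrom (T : ℕ → M) : ℕ → M := kleene (h.step T)

theorem flowWith_eq_flowFrom (i : ℕ → ℕ → M) : h.flowWith i = h.flowFrom (inflowSum i) := rfl

theorem flow_eq_flowFrom : h.flow = h.flowFrom (inflowSum h.inflow) := rfl

theorem tf_eq_outSum (i : ℕ → ℕ → M) : h.tf i = h.outSum (h.flowWith i) := rfl

theorem inflow_eq_zero_of_mem {y : ℕ} (hy : y ∈ h.X) (x : ℕ) : h.inflow y x = 0 :=
  by_contra fun h0 => (h.inflow_dom y x h0).1 hy

theorem inflow_eq_zero_of_notMem (y : ℕ) {x : ℕ} (hx : x ∉ h.X) : h.inflow y x = 0 :=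
  by_contra fun h0 => hx (h.inflow_dom y x h0).2

theorem ωScottContinuous_outSum : ωScottContinuous h.outSum :=
  ωScottContinuous.of_apply₂ fun x => ωScottContinuous.finset_sum _ fun y hy =>
    (h.econt y x hy).ωScottContinuous.comp (ωScottContinuous.apply y)

variable {h}

theorem step_of_mem {x : ℕ} (hx : x ∈ h.X) (T c : ℕ → M) : h.step T c x = T x + h.outSum c x :=
  if_pos hx

theorem step_of_notMem {x : ℕ} (hx : x ∉ h.X) (T c : ℕ → M) : h.step T c x = 0 :=
  if_neg hx

theorem outSum_congr {c d : ℕ → M} (hcd : Set.EqOn c d h.X) : h.outSum c = h.outSum d :=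
  funext fun x => Finset.sum_congr rfl fun y hy => by rw [hcd hy]

theorem step_congr {T T' c d : ℕ → M} (hT : Set.EqOn T T' h.X) (hcd : Set.EqOn c d h.X) :
    h.step T c = h.step T' d := by
  funext x
  by_cases hx : x ∈ h.X
  · rw [step_of_mem hx, step_of_mem hx, hT hx, outSum_congr hcd]
  · rw [step_of_notMem hx, step_of_notMem hx]

theorem flowFrom_congr {T T' : ℕ → M} (hT : Set.EqOn T T' h.X) :
    h.flowFrom T = h.flowFrom T' := by
  have : h.step T = h.step T' := funext fun _ => step_congr hT (Set.eqOn_refl _ _)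
  rw [flowFrom, flowFrom, this]

theorem dependsOnlyOn_step (T : ℕ → M) : DependsOnlyOn h.X (h.step T) :=
  fun _ _ hcd _ _ => by rw [step_congr (Set.eqOn_refl T _) hcd]

variable (h)

theorem ωScottContinuous_step :
    ωScottContinuous fun p : (ℕ → M) × (ℕ → M) => h.step p.1 p.2 := by
  refine ωScottContinuous.of_apply₂ fun x => ?_
  by_cases hx : x ∈ h.X
  · simp only [step_of_mem hx]
    exact ((ωScottContinuous.apply x).comp Prod.ωScottContinuous_fst).add
      ((h.ωScottContinuous_outSum.apply₂ x).comp Prod.ωScottContinuous_snd)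
  · simp only [step_of_notMem hx]
    exact ωScottContinuous.const

theorem ωScottContinuous_step_right (T : ℕ → M) : ωScottContinuous (h.step T) :=
  h.ωScottContinuous_step.comp
    (Prod.ωScottContinuous.prodMk ωScottContinuous.const ωScottContinuous.id)

theorem ωScottContinuous_flowFrom : ωScottContinuous h.flowFrom :=
  ωScottContinuous_kleene h.ωScottContinuous_step

theorem step_flowFrom (T : ℕ → M) : h.step T (h.flowFrom T) = h.flowFrom T :=
  map_kleene (h.ωScottContinuous_step_right T)

theorem flowFrom_le {T a : ℕ → M} (ha : h.step T a ≤ a) : h.flowFrom T ≤ a :=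
  kleene_le (h.ωScottContinuous_step_right T) ha

end Step

section Gmul

variable {s t : FlowGraph M}

theorem outSum_gmul (hd : Disjoint s.X t.X) (c : ℕ → M) :
    (gmul s t).outSum c = s.outSum c + t.outSum c := by
  funext x
  change ∑ y ∈ s.X ∪ t.X, (if y ∈ s.X then s.E y x else t.E y x) (c y) = _
  rw [Finset.sum_union hd, Pi.add_apply]
  congr 1 <;> refine Finset.sum_congr rfl fun y hy => ?_
  · rw [if_pos hy]
  · rw [if_neg (Finset.disjoint_right.mp hd hy)]

theorem step_gmul_of_mem_left (hd : Disjoint s.X t.X) {x : ℕ} (hx : x ∈ s.X) (T c : ℕ → M) :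
    (gmul s t).step T c x = s.step (T + t.outSum c) c x := by
  rw [step_of_mem (Finset.mem_union_left _ hx), step_of_mem hx, outSum_gmul hd, Pi.add_apply,
    Pi.add_apply, add_assoc, add_comm (s.outSum c x)]

theorem step_gmul_of_mem_right (hd : Disjoint s.X t.X) {x : ℕ} (hx : x ∈ t.X) (T c : ℕ → M) :
    (gmul s t).step T c x = t.step (T + s.outSum c) c x := by
  rw [step_of_mem (Finset.mem_union_right _ hx), step_of_mem hx, outSum_gmul hd, Pi.add_apply,
    Pi.add_apply, add_assoc]

theorem flowFrom_gmul_left (hd : Disjoint s.X t.X) (T : ℕ → M) :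
    Set.EqOn (s.flowFrom (T + t.outSum ((gmul s t).flowFrom T))) ((gmul s t).flowFrom T) s.X := by
  set G := (gmul s t).flowFrom T
  set F := s.flowFrom (T + t.outSum G)
  have hFG : F ≤ G := s.flowFrom_le fun x => by
    by_cases hx : x ∈ s.X
    · rw [← step_gmul_of_mem_left hd hx, (gmul s t).step_flowFrom]
    · rw [step_of_notMem hx]
      exact zero_le
  -- Park induction: `F` on `s.X` and `G` elsewhere is a prefixed point of the step of `gmul s t`.
  have hGF : G ≤ s.X.piecewise F G := (gmul s t).flowFrom_le fun x => by
    have htG : t.outSum (s.X.piecewise F G) = t.outSum G := outSum_congr fun y hy =>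
      Finset.piecewise_eq_of_notMem _ _ _ (Finset.disjoint_right.mp hd hy)
    by_cases hx : x ∈ s.X
    · rw [step_gmul_of_mem_left hd hx, Finset.piecewise_eq_of_mem _ _ _ hx, htG,
        step_congr (d := F) (Set.eqOn_refl _ _) fun y hy => Finset.piecewise_eq_of_mem _ _ _ hy,
        s.step_flowFrom]
    · rw [Finset.piecewise_eq_of_notMem _ _ _ hx]
      exact (((gmul s t).ωScottContinuous_step_right T).monotone
        (Finset.piecewise_le_of_le_of_le _ hFG le_rfl) x).trans_eq
        (congrFun ((gmul s t).step_flowFrom T) x)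
  intro x hx
  refine le_antisymm (hFG x) ?_
  simpa only [Finset.piecewise_eq_of_mem _ _ _ (Finset.mem_coe.mp hx)] using hGF x

theorem outSum_flowFrom_gmul_left (hd : Disjoint s.X t.X) (T : ℕ → M) :
    s.outSum (s.flowFrom (T + t.outSum ((gmul s t).flowFrom T))) =
      s.outSum ((gmul s t).flowFrom T) :=
  outSum_congr (flowFrom_gmul_left hd T)

/-- The step of `t` with the `s`-component of the flow of `gmul s t` solved for (Bekić). -/
noncomputable def nestedStep (s t : FlowGraph M) (T c : ℕ → M) : ℕ → M :=
  t.step (T + s.outSum (s.flowFrom (T + t.outSum c))) c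

theorem ωScottContinuous_nestedStep (s t : FlowGraph M) (T : ℕ → M) :
    ωScottContinuous (nestedStep s t T) :=
  t.ωScottContinuous_step.comp <| Prod.ωScottContinuous.prodMk
    ((s.ωScottContinuous_outSum.comp (s.ωScottContinuous_flowFrom.comp
      (t.ωScottContinuous_outSum.const_add T))).const_add T) ωScottContinuous.id

theorem dependsOnlyOn_nestedStep (s t : FlowGraph M) (T : ℕ → M) :
    DependsOnlyOn t.X (nestedStep s t T) := fun c d hcd x _ => by
  rw [nestedStep, nestedStep, outSum_congr hcd, step_congr (Set.eqOn_refl _ _) hcd]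

theorem kleene_nestedStep (hd : Disjoint s.X t.X) (T : ℕ → M) :
    Set.EqOn (kleene (nestedStep s t T)) ((gmul s t).flowFrom T) t.X := by
  set G := (gmul s t).flowFrom T
  set K := kleene (nestedStep s t T)
  have hK := ωScottContinuous_nestedStep s t T
  have hKG : K ≤ G := kleene_le hK fun x => by
    by_cases hx : x ∈ t.X
    · rw [nestedStep, outSum_flowFrom_gmul_left hd, ← step_gmul_of_mem_right hd hx,
        (gmul s t).step_flowFrom]
    · rw [nestedStep, step_of_notMem hx]
      exact zero_le
  set F := s.flowFrom (T + t.outSum K)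
  have hGK : G ≤ s.X.piecewise F K := (gmul s t).flowFrom_le fun x => by
    have htK : t.outSum (s.X.piecewise F K) = t.outSum K := outSum_congr fun y hy =>
      Finset.piecewise_eq_of_notMem _ _ _ (Finset.disjoint_right.mp hd hy)
    have hsF : s.outSum (s.X.piecewise F K) = s.outSum F := outSum_congr fun y hy =>
      Finset.piecewise_eq_of_mem _ _ _ hy
    by_cases hxs : x ∈ s.X
    · rw [step_gmul_of_mem_left hd hxs, Finset.piecewise_eq_of_mem _ _ _ hxs, htK,
        step_congr (d := F) (Set.eqOn_refl _ _) fun y hy => Finset.piecewise_eq_of_mem _ _ _ hy,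
        s.step_flowFrom]
    rw [Finset.piecewise_eq_of_notMem _ _ _ hxs]
    by_cases hxt : x ∈ t.X
    · rw [step_gmul_of_mem_right hd hxt, hsF,
        step_congr (d := K) (Set.eqOn_refl _ _) fun y hy =>
          Finset.piecewise_eq_of_notMem _ _ _ (Finset.disjoint_right.mp hd hy)]
      exact (congrFun (map_kleene hK) x).le
    · rw [step_of_notMem (by simp [gmul, hxs, hxt])]
      exact zero_le
  intro x hx
  refine le_antisymm (hKG x) ?_
  simpa only [Finset.piecewise_eq_of_notMem _ _ _ (Finset.disjoint_right.mp hd hx)] using hGK x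

end Gmul

end FlowGraph

section Compatible

open FlowGraph

variable {r : M → M → Prop} {h s t : FlowGraph M}

theorem Compatible.rel_outSum (hc : Compatible r h) {c d : ℕ → M} (hcd : RelOn r h.X c d)
    (x : ℕ) : r (h.outSum c x) (h.outSum d x) :=
  hc.isAddPreorderRel.sum _ fun y hy => hc.2.2.2.1 y x hy _ _ (hcd y hy)

theorem Compatible.relOn_step (hc : Compatible r h) {T T' c d : ℕ → M} (hT : RelOn r h.X T T')
    (hcd : RelOn r h.X c d) : RelOn r h.X (h.step T c) (h.step T' d) := fun x hx => by
  rw [step_of_mem hx, step_of_mem hx]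
  exact hc.isAddPreorderRel.add (hT x hx) (hc.rel_outSum hcd x)

theorem Compatible.relOn_flowFrom (hc : Compatible r h) {T T' : ℕ → M}
    (hT : RelOn r h.X T T') : RelOn r h.X (h.flowFrom T) (h.flowFrom T') :=
  have hrefl : ∀ m, r m m := hc.isAddPreorderRel.refl
  hc.2.2.2.2.relOn_kleene hrefl (dependsOnlyOn_step T) (dependsOnlyOn_step T')
    (h.ωScottContinuous_step_right T) (h.ωScottContinuous_step_right T')
    (fun _ _ => hc.relOn_step fun x _ => hrefl (T x))
    (fun _ _ => hc.relOn_step fun x _ => hrefl (T' x))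
    fun _ _ hcd _ => hc.relOn_step hT hcd

theorem Compatible.relOn_nestedStep (hcs : Compatible r s) (hct : Compatible r t) (T : ℕ → M)
    {c d : ℕ → M} (hcd : RelOn r t.X c d) :
    RelOn r t.X (nestedStep s t T c) (nestedStep s t T d) :=
  have hr := hcs.isAddPreorderRel
  hct.relOn_step (fun x _ => hr.add_left _ <| hcs.rel_outSum
    (hcs.relOn_flowFrom fun z _ => hr.add_left _ (hct.rel_outSum hcd z)) x) hcd

end Compatible

namespace FlowGraph

section Mul

variable {s t : FlowGraph M}

theorem gmul_inflow_of_mem_left (hd : Disjoint s.X t.X) {x : ℕ} (hx : x ∈ s.X) (y : ℕ) :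
    (gmul s t).inflow y x = if y ∈ t.X then 0 else s.inflow y x := by
  change (if y ∈ s.X ∪ t.X then 0 else s.inflow y x + t.inflow y x) = _
  by_cases hyt : y ∈ t.X
  · simp [hyt]
  by_cases hys : y ∈ s.X
  · simp [hys, hyt, s.inflow_eq_zero_of_mem hys]
  · simp [hys, hyt, t.inflow_eq_zero_of_notMem y (Finset.disjoint_left.mp hd hx)]

theorem gmul_inflow_congr {s' : FlowGraph M} (hX : s.X = s'.X) (hin : s.inflow = s'.inflow) :
    (gmul s t).inflow = (gmul s' t).inflow := by
  change (fun y x => if y ∈ s.X ∪ t.X then 0 else s.inflow y x + t.inflow y x) =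
    fun y x => if y ∈ s'.X ∪ t.X then 0 else s'.inflow y x + t.inflow y x
  rw [hX, hin]

theorem flow_gmul_eq_flowFrom {s' : FlowGraph M} (hX : s.X = s'.X) (hin : s.inflow = s'.inflow) :
    (gmul s' t).flow = (gmul s' t).flowFrom (inflowSum (gmul s t).inflow) := by
  rw [flow_eq_flowFrom, gmul_inflow_congr hX hin]

theorem MDef.flow_left (hmul : MDef s t) : Set.EqOn (gmul s t).flow s.flow s.X :=
  fun x hx => hmul.2.2.1 x hx

theorem MDef.flow_right (hmul : MDef s t) : Set.EqOn (gmul s t).flow t.flow t.X :=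
  fun x hx => hmul.2.2.2 x hx

theorem MDef.sum_inflow_left (hmul : MDef s t) {x : ℕ} (hx : x ∈ s.X) :
    ∑ y ∈ t.X, s.inflow y x = t.outSum t.flow x :=
  Finset.sum_congr rfl fun y hy => (hmul.2.1 x hx y hy).2.symm

theorem MDef.sum_inflow_right (hmul : MDef s t) {x : ℕ} (hx : x ∈ t.X) :
    ∑ y ∈ s.X, t.inflow y x = s.outSum s.flow x :=
  Finset.sum_congr rfl fun y hy => (hmul.2.1 y hy x hx).1.symm

theorem MDef.outSum_flow_gmul (hmul : MDef s t) :
    (gmul s t).outSum (gmul s t).flow = s.outSum s.flow + t.outSum t.flow := by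
  rw [outSum_gmul hmul.1, outSum_congr hmul.flow_left, outSum_congr hmul.flow_right]

/-- The inflow of `s` from `t.X`, which is `t`'s outflow under `t.flow`, is replaced by `t`'s
outflow under `c`. -/
theorem MDef.exists_inflow_le (hmul : MDef s t) {c : ℕ → M} (hc : ∀ y ∈ t.X, c y ≤ t.flow y) :
    ∃ i : ℕ → ℕ → M, (∀ y x, i y x ≤ s.inflow y x) ∧
      Set.EqOn (inflowSum i) (inflowSum (gmul s t).inflow + t.outSum c) s.X := by
  refine ⟨fun y x => if x ∈ s.X then
    (gmul s t).inflow y x + (t.X : Set ℕ).indicator (fun y => t.E y x (c y)) y else 0,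
    fun y x => ?_, fun x hx => ?_⟩
  · by_cases hx : x ∈ s.X
    · simp only [if_pos hx, gmul_inflow_of_mem_left hmul.1 hx]
      by_cases hy : y ∈ t.X
      · rw [if_pos hy, Set.indicator_of_mem (Finset.mem_coe.2 hy), zero_add,
          ← (hmul.2.1 x hx y hy).2]
        exact (t.econt y x hy).ωScottContinuous.monotone (hc y hy)
      · rw [if_neg hy, Set.indicator_of_notMem (by simpa using hy), add_zero]
    · simp only [if_neg hx]
      exact zero_le
  · simp only [inflowSum, if_pos (Finset.mem_coe.1 hx)]
    rw [finsum_add_distrib ((gmul s t).inflow_fin x)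
      (t.X.finite_toSet.subset Set.support_indicator_subset), ← finsum_mem_def,
      finsum_mem_coe_finset]
    rfl

theorem ext {h h' : FlowGraph M} (hX : h.X = h'.X) (hE : h.E = h'.E)
    (hin : h.inflow = h'.inflow) : h = h' := by
  cases h
  cases h'
  subst hX hE hin
  rfl

theorem gmul_comm (hd : Disjoint s.X t.X) : gmul s t = gmul t s := by
  refine ext (Finset.union_comm _ _) (funext fun a => funext fun b => ?_)
    (funext fun y => funext fun x => ?_)
  · change (if a ∈ s.X then s.E a b else t.E a b) = if a ∈ t.X then t.E a b else s.E a b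
    by_cases hs : a ∈ s.X
    · rw [if_pos hs, if_neg (Finset.disjoint_left.mp hd hs)]
    by_cases ht : a ∈ t.X
    · rw [if_neg hs, if_pos ht]
    · rw [if_neg hs, if_neg ht, t.edom a b ht, s.edom a b hs]
  · change (if y ∈ s.X ∪ t.X then 0 else s.inflow y x + t.inflow y x) =
      if y ∈ t.X ∪ s.X then 0 else t.inflow y x + s.inflow y x
    rw [Finset.union_comm, add_comm]

theorem restrict_gmul_inflow_left (hd : Disjoint s.X t.X) {x : ℕ} (hx : x ∈ s.X) (y : ℕ) :
    ((gmul s t).restrict s.X).inflow y x =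
      if y ∈ t.X then t.E y x ((gmul s t).flow y) else s.inflow y x := by
  change (if x ∈ (s.X ∪ t.X) ∩ s.X then
    (if y ∈ s.X ∪ t.X then (if y ∈ s.X then 0 else (gmul s t).E y x ((gmul s t).flow y))
      else (gmul s t).inflow y x) else 0) = _
  rw [Finset.union_inter_cancel_left, if_pos hx]
  by_cases hyt : y ∈ t.X
  · have hys := Finset.disjoint_right.mp hd hyt
    rw [if_pos (Finset.mem_union_right _ hyt), if_neg hys, if_pos hyt]
    change (if y ∈ s.X then s.E y x else t.E y x) _ = _
    rw [if_neg hys]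
  rw [if_neg hyt]
  by_cases hys : y ∈ s.X
  · rw [if_pos (Finset.mem_union_left _ hys), if_pos hys, s.inflow_eq_zero_of_mem hys]
  · rw [if_neg (by simp [hys, hyt]), gmul_inflow_of_mem_left hd hx, if_neg hyt]

theorem restrict_gmul_left_mem_closureSet {r : M → M → Prop} (hd : Disjoint s.X t.X)
    (hb : ∀ x ∈ s.X, r (∑ y ∈ t.X, s.inflow y x) (t.outSum (gmul s t).flow x)) :
    (gmul s t).restrict s.X ∈ closureSet r t.X s := by
  refine ⟨Finset.union_inter_cancel_left, funext fun a => funext fun b => ?_,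
    fun y hy x => ?_, fun x hx => ?_⟩
  · change (if a ∈ (s.X ∪ t.X) ∩ s.X then (if a ∈ s.X then s.E a b else t.E a b)
      else fun _ => 0) = s.E a b
    rw [Finset.union_inter_cancel_left]
    by_cases ha : a ∈ s.X
    · rw [if_pos ha, if_pos ha]
    · rw [if_neg ha, s.edom a b ha]
  · by_cases hx : x ∈ s.X
    · rw [restrict_gmul_inflow_left hd hx, if_neg hy]
    · rw [s.inflow_eq_zero_of_notMem y hx,
        inflow_eq_zero_of_notMem _ y fun h => hx (Finset.mem_inter.mp h).2]
  · rw [Finset.sum_congr rfl fun y hy => (restrict_gmul_inflow_left hd hx y).trans (if_pos hy)]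
    exact hb x hx

end Mul

section Ctx

variable {r : M → M → Prop} {h₁ h₂ hF : FlowGraph M}

theorem rel_outSum_flowFrom_of_ctxLe (hmul : MDef h₁ hF) (hctx : ctxLe r h₁ h₂)
    (hc₂ : Compatible r h₂) (hcF : Compatible r hF) {c d : ℕ → M}
    (hc : ∀ y ∈ hF.X, c y ≤ hF.flow y) (hcd : RelOn r hF.X c d) {x : ℕ} (hx : x ∉ h₁.X) :
    r (h₁.outSum (h₁.flowFrom (inflowSum (gmul h₁ hF).inflow + hF.outSum c)) x)
      (h₂.outSum (h₂.flowFrom (inflowSum (gmul h₁ hF).inflow + hF.outSum d)) x) := by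
  obtain ⟨hX, -, htf⟩ := hctx
  obtain ⟨i, hi, hsum⟩ := hmul.exists_inflow_le hc
  have hr := hc₂.isAddPreorderRel
  rw [← flowFrom_congr hsum, ← flowWith_eq_flowFrom, ← tf_eq_outSum]
  refine hr.trans _ _ _ (htf i hi x hx) ?_
  rw [tf_eq_outSum, flowWith_eq_flowFrom, flowFrom_congr (hX ▸ hsum)]
  exact hc₂.rel_outSum (hc₂.relOn_flowFrom fun z _ => hr.add_left _ (hcF.rel_outSum hcd z)) x

theorem relOn_flow_gmul_of_ctxLe (hmul : MDef h₁ hF) (hctx : ctxLe r h₁ h₂)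
    (hc₁ : Compatible r h₁) (hc₂ : Compatible r h₂) (hcF : Compatible r hF) :
    RelOn r hF.X hF.flow (gmul h₂ hF).flow := by
  set T := inflowSum (gmul h₁ hF).inflow
  have hr := hcF.isAddPreorderRel
  have hK₁ : Set.EqOn (kleene (nestedStep h₁ hF T)) hF.flow hF.X :=
    (kleene_nestedStep hmul.1 T).trans hmul.flow_right
  have hK₂ : Set.EqOn (kleene (nestedStep h₂ hF T)) (gmul h₂ hF).flow hF.X := by
    rw [flow_gmul_eq_flowFrom hctx.1 hctx.2.1]
    exact kleene_nestedStep (hctx.1 ▸ hmul.1) T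
  intro x hx
  rw [← hK₁ hx, ← hK₂ hx]
  refine hcF.2.2.2.2.relOn_kleene hr.refl (dependsOnlyOn_nestedStep _ _ _)
    (dependsOnlyOn_nestedStep _ _ _) (ωScottContinuous_nestedStep _ _ _)
    (ωScottContinuous_nestedStep _ _ _) (fun _ _ => hc₁.relOn_nestedStep hcF T)
    (fun _ _ => hc₂.relOn_nestedStep hcF T) (fun c d hcd hc => ?_) x hx
  refine hcF.relOn_step (fun y hy => hr.add_left _ ?_) hcd
  exact rel_outSum_flowFrom_of_ctxLe hmul hctx hc₂ hcF (fun z hz => (hc z).trans (hK₁ hz).le)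
    hcd (Finset.disjoint_right.mp hmul.1 hy)

theorem rel_outSum_flow_of_ctxLe (hmul : MDef h₁ hF) (hctx : ctxLe r h₁ h₂)
    (hc₂ : Compatible r h₂) (hcF : Compatible r hF)
    (hflow : RelOn r hF.X hF.flow (gmul h₂ hF).flow) :
    ∀ x ∉ h₁.X, r (h₁.outSum h₁.flow x) (h₂.outSum (gmul h₂ hF).flow x) := by
  intro x hx
  set T := inflowSum (gmul h₁ hF).inflow
  have key := rel_outSum_flowFrom_of_ctxLe hmul hctx hc₂ hcF (fun _ _ => le_rfl) hflow hx
  have e₁ : h₁.outSum (h₁.flowFrom (T + hF.outSum hF.flow)) = h₁.outSum h₁.flow := by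
    rw [← outSum_congr hmul.flow_right, ← outSum_congr hmul.flow_left]
    exact outSum_flowFrom_gmul_left hmul.1 T
  have e₂ : h₂.outSum (h₂.flowFrom (T + hF.outSum (gmul h₂ hF).flow)) =
      h₂.outSum (gmul h₂ hF).flow := by
    rw [flow_gmul_eq_flowFrom hctx.1 hctx.2.1]
    exact outSum_flowFrom_gmul_left (hctx.1 ▸ hmul.1) T
  rwa [e₁, e₂] at key

end Ctx

end FlowGraph

open FlowGraph in
/-- Upward-closed outflow lemma. For `h₁ ⋆ h_F` defined,
`h₁ ⪯ctx h₂` and `⪯` compatible with `h₁`, `h₂`, `h_F`, the graph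
`h_{2+F} = (h₂.X ⊎ h_F.X, h₂.E ⊎ h_F.E, (h₁ ⋆ h_F).in)` (which is `h₂ ⌢ h_F`)
has a `⪯`-larger transfer function on the inflow `(h₁ ⋆ h_F).in` than
`h₁ ⋆ h_F`, its restriction to `h₂.X` lies in `closure^{h_F.X}_⪯(h₂)`, and its
restriction to `h_F.X` lies in `closure^{h₂.X}_⪯(h_F)`. -/
theorem upward_closed_outflow (r : M → M → Prop) (h₁ h₂ hF : FlowGraph M)
    (hmul : MDef h₁ hF) (hctx : ctxLe r h₁ h₂)
    (hc₁ : Compatible r h₁) (hc₂ : Compatible r h₂) (hcF : Compatible r hF) :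
    (∀ y, y ∉ h₂.X ∪ hF.X →
      r ((gmul h₁ hF).tf (gmul h₁ hF).inflow y) ((gmul h₂ hF).tf (gmul h₁ hF).inflow y)) ∧
    restrict (gmul h₂ hF) h₂.X ∈ closureSet r hF.X h₂ ∧
    restrict (gmul h₂ hF) hF.X ∈ closureSet r h₂.X hF := by
  obtain ⟨hX, hin, -⟩ := id hctx
  have hd : Disjoint h₂.X hF.X := hX ▸ hmul.1
  have hflow := relOn_flow_gmul_of_ctxLe hmul hctx hc₁ hc₂ hcF
  have hout := rel_outSum_flow_of_ctxLe hmul hctx hc₂ hcF hflow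
  refine ⟨fun y hy => ?_, restrict_gmul_left_mem_closureSet hd fun x hx => ?_, ?_⟩
  · have hL : (gmul h₁ hF).tf (gmul h₁ hF).inflow = h₁.outSum h₁.flow + hF.outSum hF.flow :=
      hmul.outSum_flow_gmul
    have hR : (gmul h₂ hF).tf (gmul h₁ hF).inflow =
        h₂.outSum (gmul h₂ hF).flow + hF.outSum (gmul h₂ hF).flow := by
      rw [tf_eq_outSum, flowWith_eq_flowFrom, ← flow_gmul_eq_flowFrom hX hin, outSum_gmul hd]
    rw [hL, hR]
    exact hcF.isAddPreorderRel.add (hout y (hX ▸ fun h => hy (Finset.mem_union_left _ h)))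
      (hcF.rel_outSum hflow y)
  · rw [← hin, hmul.sum_inflow_left (hX ▸ hx)]
    exact hcF.rel_outSum hflow x
  · rw [gmul_comm hd]
    refine restrict_gmul_left_mem_closureSet hd.symm fun x hx => ?_
    rw [← gmul_comm hd, ← hX, hmul.sum_inflow_right hx]
    exact hout x (Finset.disjoint_right.mp hmul.1 hx)
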